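/- For an even cycle C_n (n ≥ 4 even), the number of mutual-visibility sets of cardinality 3 equals (n−2)n(n+8)/24. -/

import Mathlib

open SimpleGraph Polynomial

/-- Two vertices `u`, `v` are `X`-visible in `G` if some shortest `u`\u2013`v` path
has no internal vertex in `X`. -/
def SimpleGraph.XVisible {V : Type*} (G : SimpleGraph V) (X : Set V) (u v : V) : Prop :=
  ∃ p : G.Walk u v, p.IsPath ∧ p.length = G.dist u v ∧
    ∀ w ∈ p.support, w ∈ X → w = u ∨ w = v

/-- `X` is a mutual-visibility set of `G`. -/
def SimpleGraph.IsMutualVisibilitySet {V : Type*} (G : SimpleGraph V) (X : Set V) : Prop :=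
  ∀ u ∈ X, ∀ v ∈ X, G.XVisible X u v


open scoped Classical in
/-- The number of mutual-visibility sets of cardinality 3 (the maximum) in the cycle `C_n`. -/
noncomputable def rmuC (n : ℕ) : ℕ :=
  (Finset.univ.filter (fun X : Finset (Fin n) =>
    X.card = 3 ∧ (cycleGraph n).IsMutualVisibilitySet ↑X)).card

/-!
Write a 3-subset of `C_n` as `{a, a + x, a + x + y}` with cyclic gaps `x`, `y` and
`z = n - x - y`. It is a mutual-visibility set iff every gap is at most `n / 2`: two of its
vertices whose gap exceeds `n / 2` are joined by a unique shortest path, the complementary arc,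
and that arc passes through the third vertex. Counting triples (starting vertex, first gap,
second gap), every such set is obtained once from each of its three vertices, so
`3 · rmuC n = n · #{admissible (x, y)}`, and for `n = 2M` there are `(M - 1)(M + 4) / 2`
admissible gap pairs.
-/

open Fin.CommRing Finset

namespace SimpleGraph

variable {V : Type*} {G : SimpleGraph V} {X : Set V} {u v : V}

lemma xVisible_self (X : Set V) (u : V) : G.XVisible X u u :=
  ⟨.nil, .nil, by simp, fun w hw _ => .inl (by simpa using hw)⟩

lemma XVisible.symm (h : G.XVisible X u v) : G.XVisible X v u := by
  obtain ⟨p, hp, hlen, hX⟩ := h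
  refine ⟨p.reverse, hp.reverse, by rw [Walk.length_reverse, hlen, dist_comm], ?_⟩
  intro w hw hwX
  exact (hX w (by simpa using hw) hwX).symm

lemma isMutualVisibilitySet_triple_iff {a b c : V} :
    G.IsMutualVisibilitySet {a, b, c} ↔
      G.XVisible {a, b, c} a b ∧ G.XVisible {a, b, c} b c ∧ G.XVisible {a, b, c} c a := by
  refine ⟨fun h => ⟨h a (by simp) b (by simp), h b (by simp) c (by simp),
    h c (by simp) a (by simp)⟩, fun ⟨hab, hbc, hca⟩ u hu v hv => ?_⟩
  simp only [Set.mem_insert_iff, Set.mem_singleton_iff] at hu hv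
  rcases hu with rfl | rfl | rfl <;> rcases hv with rfl | rfl | rfl <;>
    first | exact xVisible_self _ _ | assumption | exact XVisible.symm ‹_›

end SimpleGraph

namespace Fin

variable {n : ℕ} [NeZero n]

lemma val_sub_add_val_sub (a b c : Fin n) :
    (c - b).val + (b - a).val = (c - a).val ∨ (c - b).val + (b - a).val = (c - a).val + n := by
  have h := val_add_eq_ite (c - b) (b - a)
  rw [sub_add_sub_cancel] at h
  split_ifs at h <;> omega

lemma val_sub_pos_iff {a b : Fin n} : 0 < (b - a).val ↔ a ≠ b := by
  rw [val_pos_iff, pos_iff_ne_zero, sub_ne_zero, ne_comm]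

lemma val_sub_add_val_sub_swap {a b : Fin n} (h : a ≠ b) : (b - a).val + (a - b).val = n := by
  have := val_sub_add_val_sub a b a
  have := val_sub_pos_iff.2 h
  simp only [sub_self, val_zero] at *
  omega

lemma val_add_natCast_sub_self (a : Fin n) {k : ℕ} (hk : k < n) :
    (a + (k : Fin n) - a).val = k := by
  rw [add_sub_cancel_left, val_cast_of_lt hk]

lemma add_natCast_val_sub (a b : Fin n) : a + ((b - a).val : Fin n) = b := by
  rw [cast_val_eq_self, add_sub_cancel]

end Fin

namespace SimpleGraph

variable {n : ℕ} [NeZero n]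

lemma cycleGraph_val_sub_le_of_adj {x y : Fin n} (h : (cycleGraph n).Adj x y) (t : Fin n)
    (hy : y ≠ t) : (x - t).val ≤ (y - t).val + 1 ∧ (t - x).val ≤ (t - y).val + 1 := by
  have := Fin.val_sub_add_val_sub_swap h.ne
  have := Fin.val_sub_add_val_sub t y x
  have := Fin.val_sub_add_val_sub x y t
  have := Fin.val_sub_pos_iff.2 hy
  have := Fin.val_sub_pos_iff.2 hy.symm
  have := (x - t).isLt
  have := (t - x).isLt
  rw [cycleGraph_adj'] at h
  omega

/-- A walk that avoids `t` moves its offset from `t` by at most one per step and cannot wrap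
around, since wrapping would pass through `t`. -/
lemma cycleGraph_le_length_of_notMem_support {u v : Fin n} (p : (cycleGraph n).Walk u v)
    {t : Fin n} (ht : t ∉ p.support) : (v - t).val ≤ (u - t).val + p.length := by
  induction p with
  | nil => simp
  | cons h q ih =>
    rw [Walk.support_cons, List.mem_cons, not_or] at ht
    have := (cycleGraph_val_sub_le_of_adj h.symm t (Ne.symm ht.1)).1
    have := ih ht.2
    rw [Walk.length_cons]
    omega

lemma cycleGraph_min_val_sub_le_length {u v : Fin n} (p : (cycleGraph n).Walk u v) :
    min (u - v).val (v - u).val ≤ p.length := by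
  induction p with
  | nil => simp
  | @cons u w v h q ih =>
    rw [Walk.length_cons]
    by_cases hwv : w = v
    · subst hwv
      rw [cycleGraph_adj'] at h
      omega
    · have := cycleGraph_val_sub_le_of_adj h v hwv
      omega

lemma cycleGraph_exists_walk_add (hn : 1 < n) (u : Fin n) (k : ℕ) :
    ∃ p : (cycleGraph n).Walk u (u + k), p.length = k ∧ ∀ w ∈ p.support, (w - u).val ≤ k := by
  induction k with
  | zero => exact ⟨Walk.nil.copy rfl (by simp), by simp, by simp⟩
  | succ k ih =>
    obtain ⟨p, hlen, hsupp⟩ := ih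
    have hadj : (cycleGraph n).Adj (u + k) (u + (k + 1 : ℕ)) := by
      rw [cycleGraph_adj', Nat.cast_succ, ← add_assoc, add_sub_cancel_left, Fin.val_one',
        Nat.mod_eq_of_lt hn]
      exact .inr rfl
    refine ⟨p.concat hadj, by simp [hlen], fun w hw => ?_⟩
    rw [Walk.support_concat, List.mem_append, List.mem_singleton] at hw
    rcases hw with hw | rfl
    · exact (hsupp w hw).trans k.le_succ
    · rw [add_sub_cancel_left, Fin.val_natCast]
      exact Nat.mod_le _ _

lemma cycleGraph_dist (hn : 1 < n) (u v : Fin n) :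
    (cycleGraph n).dist u v = min (u - v).val (v - u).val := by
  have hle : ∀ u v : Fin n, (cycleGraph n).dist u v ≤ (v - u).val := fun u v => by
    obtain ⟨p, hlen, -⟩ := cycleGraph_exists_walk_add hn u (v - u).val
    simpa [hlen] using dist_le (p.copy rfl (Fin.add_natCast_val_sub u v))
  obtain ⟨p, hp⟩ := (cycleGraph_preconnected u v).exists_walk_length_eq_dist
  have := cycleGraph_min_val_sub_le_length p
  have := hle u v
  have := dist_comm (G := cycleGraph n) ▸ hle v u
  omega

lemma cycleGraph_xVisible_of_forward (hn : 1 < n) {X : Set (Fin n)} {u v t : Fin n}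
    (hX : X ⊆ {u, v, t}) (hk : 2 * (v - u).val ≤ n) (ht : (v - u).val < (t - u).val) :
    (cycleGraph n).XVisible X u v := by
  obtain ⟨p, hlen, hsupp⟩ := cycleGraph_exists_walk_add hn u (v - u).val
  have hdist : p.length = (cycleGraph n).dist u v := by
    rcases eq_or_ne u v with rfl | huv
    · simp [hlen]
    · have := Fin.val_sub_add_val_sub_swap huv
      rw [hlen, cycleGraph_dist hn]
      omega
  refine ⟨p.copy rfl (Fin.add_natCast_val_sub u v), ?_, by simpa using hdist, fun w hw hwX => ?_⟩
  · simpa using p.isPath_of_length_eq_dist (by simpa using hdist)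
  · rw [Walk.support_copy] at hw
    rcases hX hwX with h | h | rfl
    · exact .inl h
    · exact .inr h
    · exact absurd (hsupp w hw) (by omega)

lemma cycleGraph_not_xVisible (hn : 1 < n) {X : Set (Fin n)} {u v t : Fin n} (htX : t ∈ X)
    (htv : t ≠ v) (ht : (t - v).val < (u - v).val) (hk : 2 * (u - v).val < n) :
    ¬ (cycleGraph n).XVisible X u v := by
  rintro ⟨p, -, hlen, hX⟩
  have htp : t ∉ p.support := fun htp => by
    rcases hX t htp htX with rfl | rfl
    · exact ht.false
    · exact htv rfl
  have := cycleGraph_le_length_of_notMem_support p htp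
  have := Fin.val_sub_add_val_sub v t u
  have := Fin.val_sub_add_val_sub_swap htv
  have := (u - t).isLt
  rw [hlen, cycleGraph_dist hn] at *
  -- avoiding `t` forces `p` the long way round, of length at least `n - (u - v).val`
  omega

lemma cycleGraph_xVisible_triple_iff (hn : 1 < n) {u v t : Fin n} (huv : u ≠ v)
    (ht : (v - u).val < (t - u).val) :
    (cycleGraph n).XVisible {u, v, t} u v ↔ 2 * (v - u).val ≤ n := by
  refine ⟨fun h => ?_, fun hk => cycleGraph_xVisible_of_forward hn subset_rfl hk ht⟩
  by_contra! hk
  have := Fin.val_sub_add_val_sub u v t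
  have := Fin.val_sub_add_val_sub_swap huv
  have := (t - v).isLt
  have htv : t ≠ v := by rintro rfl; exact ht.false
  exact cycleGraph_not_xVisible hn (by simp) htv (by omega) (by omega) h

lemma cycleGraph_isMutualVisibilitySet_triple_iff (hn : 1 < n) {a b c : Fin n} (hab : a ≠ b)
    (habc : (b - a).val < (c - a).val) :
    (cycleGraph n).IsMutualVisibilitySet {a, b, c} ↔
      2 * (b - a).val ≤ n ∧ 2 * (c - b).val ≤ n ∧ 2 * (a - c).val ≤ n := by
  have hbc : b ≠ c := by rintro rfl; exact habc.false
  have hca : c ≠ a := by rintro rfl; simp at habc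
  have := Fin.val_sub_add_val_sub a b c
  have := Fin.val_sub_add_val_sub a c b
  have := Fin.val_sub_add_val_sub_swap hab
  have := Fin.val_sub_add_val_sub_swap hca
  have := (c - a).isLt
  rw [isMutualVisibilitySet_triple_iff, cycleGraph_xVisible_triple_iff hn hab habc,
    show ({a, b, c} : Set (Fin n)) = {b, c, a} by rw [Set.insert_comm, Set.pair_comm],
    cycleGraph_xVisible_triple_iff hn hbc (by omega),
    show ({b, c, a} : Set (Fin n)) = {c, a, b} by rw [Set.insert_comm, Set.pair_comm],
    cycleGraph_xVisible_triple_iff hn hca (by omega)]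

end SimpleGraph

/-- The third cyclic gap is `n - x - y`; the conditions say that all three gaps are positive and
at most `n / 2`. -/
def gapPairs (n : ℕ) : Finset (ℕ × ℕ) :=
  (Icc 1 n ×ˢ Icc 1 n).filter fun p =>
    2 * p.1 ≤ n ∧ 2 * p.2 ≤ n ∧ p.1 + p.2 < n ∧ n ≤ 2 * (p.1 + p.2)

lemma mem_gapPairs {n : ℕ} {p : ℕ × ℕ} :
    p ∈ gapPairs n ↔
      1 ≤ p.1 ∧ 1 ≤ p.2 ∧ 2 * p.1 ≤ n ∧ 2 * p.2 ≤ n ∧ p.1 + p.2 < n ∧ n ≤ 2 * (p.1 + p.2) := by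
  simp only [gapPairs, mem_filter, mem_product, mem_Icc]
  omega

lemma card_gapPairs_row {m x : ℕ} (hx : x ≤ m) :
    #{p ∈ gapPairs (2 * (m + 1)) | p.1 - 1 = x} = if x < m then x + 2 else m := by
  split_ifs with h
  · rw [show {p ∈ gapPairs (2 * (m + 1)) | p.1 - 1 = x} = {x + 1} ×ˢ Icc (m - x) (m + 1) by
      ext ⟨a, b⟩
      simp only [mem_filter, mem_gapPairs, mem_product, mem_singleton, mem_Icc]
      omega]
    simp only [card_product, card_singleton, Nat.card_Icc]
    omega
  · rw [show {p ∈ gapPairs (2 * (m + 1)) | p.1 - 1 = x} = {m + 1} ×ˢ Icc 1 m by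
      ext ⟨a, b⟩
      simp only [mem_filter, mem_gapPairs, mem_product, mem_singleton, mem_Icc]
      omega]
    simp

lemma two_mul_card_gapPairs (m : ℕ) : 2 * #(gapPairs (2 * (m + 1))) = m * (m + 5) := by
  have hrows := card_eq_sum_card_fiberwise (f := fun p : ℕ × ℕ => p.1 - 1)
    (s := gapPairs (2 * (m + 1))) (t := range (m + 1)) fun p hp => by
      simp only [mem_coe, mem_gapPairs, mem_range] at hp ⊢
      omega
  rw [sum_congr rfl fun x hx => card_gapPairs_row (Nat.lt_succ_iff.1 (mem_range.1 hx)), sum_range_succ,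
    sum_congr rfl fun x hx => if_pos (mem_range.1 hx), if_neg (lt_irrefl m), sum_add_distrib,
    sum_const, card_range, smul_eq_mul] at hrows
  have hgauss := sum_range_id_mul_two m
  rw [hrows]
  rcases m with _ | k
  · simp
  · rw [Nat.add_sub_cancel] at hgauss
    linarith

section GapTriple

variable {n : ℕ} [NeZero n]

def gapTriple (a : Fin n) (x y : ℕ) : Finset (Fin n) :=
  {a, a + (x : Fin n), a + ((x + y : ℕ) : Fin n)}

lemma image_val_sub_gapTriple (a : Fin n) {x y : ℕ} (h : x + y < n) :
    (gapTriple a x y).image (fun w => (w - a).val) = {0, x, x + y} := by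
  simp only [gapTriple, image_insert, image_singleton, sub_self, Fin.val_zero,
    Fin.val_add_natCast_sub_self a h, Fin.val_add_natCast_sub_self a (show x < n by omega)]

lemma card_gapTriple (a : Fin n) {x y : ℕ} (hx : 1 ≤ x) (hy : 1 ≤ y) (h : x + y < n) :
    (gapTriple a x y).card = 3 := by
  refine le_antisymm card_le_three ?_
  have : ({0, x, x + y} : Finset ℕ).card = 3 :=
    card_eq_three.2 ⟨_, _, _, by omega, by omega, by omega, rfl⟩
  rw [← this, ← image_val_sub_gapTriple a h]
  exact card_image_le

lemma gapTriple_inj (a : Fin n) {x y x' y' : ℕ} (hx : 1 ≤ x) (hy : 1 ≤ y) (h : x + y < n)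
    (hx' : 1 ≤ x') (hy' : 1 ≤ y') (h' : x' + y' < n) (he : gapTriple a x y = gapTriple a x' y') :
    x = x' ∧ y = y' := by
  have key : ({0, x, x + y} : Finset ℕ) = {0, x', x' + y'} := by
    rw [← image_val_sub_gapTriple a h, he, image_val_sub_gapTriple a h']
  have h1 : x ∈ ({0, x', x' + y'} : Finset ℕ) := key ▸ by simp
  have h2 : x + y ∈ ({0, x', x' + y'} : Finset ℕ) := key ▸ by simp
  have h3 : x' ∈ ({0, x, x + y} : Finset ℕ) := key ▸ by simp
  simp only [mem_insert, mem_singleton] at h1 h2 h3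
  omega

lemma exists_gapTriple_eq {X : Finset (Fin n)} (hX : X.card = 3) {a : Fin n} (ha : a ∈ X) :
    ∃ x y, 1 ≤ x ∧ 1 ≤ y ∧ x + y < n ∧ gapTriple a x y = X := by
  obtain ⟨b, c, hbc, hbc_eq⟩ :=
    card_eq_two.1 (by rw [card_erase_of_mem ha, hX] : (X.erase a).card = 2)
  have hb : a ≠ b := (ne_of_mem_erase (hbc_eq ▸ mem_insert_self b {c})).symm
  have hc : a ≠ c := (ne_of_mem_erase (hbc_eq ▸ mem_insert_of_mem (mem_singleton_self c))).symm
  have hXabc : X = {a, b, c} := by rw [← insert_erase ha, hbc_eq]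
  wlog hlt : (b - a).val < (c - a).val generalizing b c
  · refine this c b hbc.symm (by rw [hbc_eq, pair_comm]) hc hb (by rw [hXabc, pair_comm]) ?_
    refine lt_of_le_of_ne (not_lt.1 hlt) fun h => hbc ?_
    simpa using (Fin.ext h).symm
  refine ⟨(b - a).val, (c - a).val - (b - a).val, Fin.val_sub_pos_iff.2 hb, by omega,
    by omega, ?_⟩
  rw [gapTriple, Nat.add_sub_cancel' hlt.le, Fin.add_natCast_val_sub, Fin.add_natCast_val_sub,
    hXabc]

lemma cycleGraph_isMutualVisibilitySet_gapTriple_iff (hn : 1 < n) (a : Fin n) {x y : ℕ}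
    (hx : 1 ≤ x) (hy : 1 ≤ y) (h : x + y < n) :
    (cycleGraph n).IsMutualVisibilitySet ↑(gapTriple a x y) ↔ (x, y) ∈ gapPairs n := by
  set b := a + (x : Fin n)
  set c := a + ((x + y : ℕ) : Fin n)
  have hba : (b - a).val = x := Fin.val_add_natCast_sub_self a (by omega)
  have hca : (c - a).val = x + y := Fin.val_add_natCast_sub_self a h
  have hab : a ≠ b := Fin.val_sub_pos_iff.1 (by omega)
  have hac : a ≠ c := Fin.val_sub_pos_iff.1 (by omega)
  have := Fin.val_sub_add_val_sub a b c
  have := Fin.val_sub_add_val_sub_swap hac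
  rw [show gapTriple a x y = {a, b, c} from rfl, coe_insert, coe_pair,
    cycleGraph_isMutualVisibilitySet_triple_iff hn hab (by omega), mem_gapPairs]
  omega

/-- The fibre over `X` consists of one triple for each starting vertex `a ∈ X`. -/
lemma card_filter_gapTriple_eq (hn : 1 < n) {X : Finset (Fin n)} (hX : X.card = 3)
    (hMV : (cycleGraph n).IsMutualVisibilitySet ↑X) :
    #{q ∈ univ ×ˢ gapPairs n | gapTriple q.1 q.2.1 q.2.2 = X} = 3 := by
  rw [← hX]
  refine card_nbij Prod.fst (fun q hq => ?_) (fun q hq q' hq' he => ?_) (fun a ha => ?_)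
  · obtain ⟨-, rfl⟩ := mem_filter.1 hq
    simp [gapTriple]
  · obtain ⟨a, x, y⟩ := q
    obtain ⟨a', x', y'⟩ := q'
    simp only [coe_filter, mem_product, mem_univ, true_and, Set.mem_ofPred_eq,
      mem_gapPairs] at hq hq' he
    subst he
    obtain ⟨rfl, rfl⟩ := gapTriple_inj a (by omega) (by omega) (by omega) (by omega) (by omega)
      (by omega) (hq.2.trans hq'.2.symm)
    rfl
  · obtain ⟨x, y, hx, hy, hxy, rfl⟩ := exists_gapTriple_eq hX ha
    refine ⟨(a, x, y), ?_, rfl⟩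
    simp [(cycleGraph_isMutualVisibilitySet_gapTriple_iff hn a hx hy hxy).1 hMV]

lemma three_mul_rmuC (hn : 1 < n) : 3 * rmuC n = n * #(gapPairs n) := by
  classical
  have key := card_eq_sum_card_fiberwise
    (f := fun q : Fin n × ℕ × ℕ => gapTriple q.1 q.2.1 q.2.2) (s := univ ×ˢ gapPairs n)
    (t := {X | X.card = 3 ∧ (cycleGraph n).IsMutualVisibilitySet ↑X}) fun q hq => by
      obtain ⟨a, x, y⟩ := q
      simp only [coe_product, coe_univ, Set.mem_prod, Set.mem_univ, true_and, mem_coe,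
        mem_gapPairs] at hq
      simp only [coe_filter, mem_univ, true_and, Set.mem_ofPred_eq]
      exact ⟨card_gapTriple a (by omega) (by omega) (by omega),
        (cycleGraph_isMutualVisibilitySet_gapTriple_iff hn a (by omega) (by omega)
          (by omega)).2 (mem_gapPairs.2 hq)⟩
  rw [card_product, card_univ, Fintype.card_fin, sum_congr rfl fun X hX =>
    card_filter_gapTriple_eq hn (mem_filter.1 hX).2.1 (mem_filter.1 hX).2.2, sum_const,
    smul_eq_mul] at key
  rw [key, rmuC, mul_comm]

end GapTriple

theorem rmu_even_cycle (n : ℕ) (hn : 4 ≤ n) (heven : Even n) :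
    24 * rmuC n = (n - 2) * n * (n + 8) := by
  obtain ⟨m, rfl⟩ : ∃ m, n = 2 * (m + 1) := by
    obtain ⟨k, rfl⟩ := heven
    exact ⟨k - 1, by omega⟩
  have h3 := three_mul_rmuC (n := 2 * (m + 1)) (by omega)
  have h2 := two_mul_card_gapPairs m
  calc 24 * rmuC (2 * (m + 1)) = 8 * (m + 1) * (2 * #(gapPairs (2 * (m + 1)))) := by linarith
    _ = (2 * (m + 1) - 2) * (2 * (m + 1)) * (2 * (m + 1) + 8) := by
      rw [h2, show 2 * (m + 1) - 2 = 2 * m by omega]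
      ring
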